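/- arXiv:2412.08320 — 5 statements merged into one kernel-verified Lean document; each statement's English description precedes it below -/
import Mathlib

section
/- Define f(X, P) = log((det(I_q − XᴴP⁻¹X)).re) on the set S = {(X, P) ∈ ℂ^{p×q} × ℂ^{p×p} : P is Hermitian positive definite and I_q − XᴴP⁻¹X is positive definite}. Then f is jointly concave on S: for (X₁, P₁), (X₂, P₂) ∈ S and t ∈ [0,1], writing (X_t, P_t) = (tX₁ + (1−t)X₂, tP₁ + (1−t)P₂) (which lies in S), one has f(X_t, P_t) ≥ t·f(X₁, P₁) + (1−t)·f(X₂, P₂). -/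
open Matrix ComplexOrder

section Stmt3Aux

variable {n : Type*} [Fintype n] [DecidableEq n]

open scoped MatrixOrder

lemma stmt3_smul_posSemidef {A : Matrix n n ℂ} (hA : A.PosSemidef) {t : ℝ} (ht : 0 ≤ t) :
    ((t : ℂ) • A).PosSemidef := by
  rw [posSemidef_iff_dotProduct_mulVec] at hA ⊢
  constructor
  · show _ = _
    rw [conjTranspose_smul, hA.1]
    norm_num
  · intro x
    have h := hA.2 x
    rw [smul_mulVec, dotProduct_smul, smul_eq_mul]
    exact mul_nonneg (by exact_mod_cast ht) h

lemma stmt3_smul_posDef {A : Matrix n n ℂ} (hA : A.PosDef) {t : ℝ} (ht : 0 < t) :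
    ((t : ℂ) • A).PosDef := by
  rw [posDef_iff_dotProduct_mulVec] at hA ⊢
  constructor
  · show _ = _
    rw [conjTranspose_smul, hA.1]
    norm_num
  · intro x hx
    have h := hA.2 (x := x) hx
    rw [smul_mulVec, dotProduct_smul, smul_eq_mul]
    exact mul_pos (by exact_mod_cast ht) h

lemma stmt3_det_smul_add_smul_one {A : Matrix n n ℂ} (hA : A.IsHermitian) (a b : ℝ) :
    ((a : ℂ) • A + (b : ℂ) • (1 : Matrix n n ℂ)).det
      = (((∏ i, (a * hA.eigenvalues i + b)) : ℝ) : ℂ) := by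
  have hU1 : (hA.eigenvectorUnitary : Matrix n n ℂ)
      * star (hA.eigenvectorUnitary : Matrix n n ℂ) = 1 :=
    mem_unitaryGroup_iff.mp hA.eigenvectorUnitary.2
  have hU2 : star (hA.eigenvectorUnitary : Matrix n n ℂ)
      * (hA.eigenvectorUnitary : Matrix n n ℂ) = 1 :=
    mem_unitaryGroup_iff'.mp hA.eigenvectorUnitary.2
  set U : Matrix n n ℂ := (hA.eigenvectorUnitary : Matrix n n ℂ) with hUdef
  set D : Matrix n n ℂ := diagonal (RCLike.ofReal ∘ hA.eigenvalues) with hDdef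
  have hspec : A = U * D * star U := hA.spectral_theorem
  have key : (a : ℂ) • A + (b : ℂ) • (1 : Matrix n n ℂ)
      = U * ((a : ℂ) • D + (b : ℂ) • 1) * star U := by
    rw [Matrix.mul_add, Matrix.add_mul, mul_smul_comm, mul_smul_comm, smul_mul_assoc,
      smul_mul_assoc, Matrix.mul_one, hU1, ← hspec]
  have hdd : (a : ℂ) • D + (b : ℂ) • (1 : Matrix n n ℂ)
      = diagonal (fun i => ((a * hA.eigenvalues i + b : ℝ) : ℂ)) := by
    rw [hDdef, ← diagonal_one, ← diagonal_smul, ← diagonal_smul, diagonal_add]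
    congr 1
    funext i
    simp [Function.comp, smul_eq_mul]
  rw [key, det_mul, det_mul, hdd, det_diagonal]
  have hdet1 : det U * ((diagonal fun i => ((a * hA.eigenvalues i + b : ℝ) : ℂ)).det)
        * det (star U)
      = (diagonal fun i => ((a * hA.eigenvalues i + b : ℝ) : ℂ)).det
        * (det (star U) * det U) := by ring
  rw [det_diagonal] at hdet1
  rw [hdet1, ← det_mul, hU2, det_one, mul_one]
  push_cast
  rfl

lemma stmt3_posdef_det_eq {A : Matrix n n ℂ} (hA : A.PosDef) :
    A.det = ((A.det.re : ℝ) : ℂ) ∧ 0 < A.det.re := by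
  have h := hA.det_pos
  rw [Complex.lt_def] at h
  obtain ⟨h1, h2⟩ := h
  simp only [Complex.zero_re, Complex.zero_im] at h1 h2
  exact ⟨Complex.ext (by simp) (by simp [← h2]), h1⟩

lemma stmt3_det_re_le_det_re {A B : Matrix n n ℂ} (hA : A.PosDef) (hBA : (B - A).PosSemidef) :
    A.det.re ≤ B.det.re := by
  have hAi : A⁻¹.PosDef := hA.inv
  set R : Matrix n n ℂ := CFC.sqrt A⁻¹ with hRdef
  have hRR : R * R = A⁻¹ := CFC.sqrt_mul_sqrt_self _ hAi.posSemidef.nonneg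
  have hRH : Rᴴ = R := (CFC.sqrt_nonneg A⁻¹).posSemidef.1
  have hdetAine : A⁻¹.det ≠ 0 := hAi.det_pos.ne'
  have hRdet2 : R.det * R.det = A⁻¹.det := by rw [← det_mul, hRR]
  have hRdetne : R.det ≠ 0 := by
    intro h; rw [h, mul_zero] at hRdet2; exact hdetAine hRdet2.symm
  have hAinv : IsUnit A.det := isUnit_iff_ne_zero.mpr hA.det_pos.ne'
  have hRunit : IsUnit R.det := isUnit_iff_ne_zero.mpr hRdetne
  have hRAR : R * A * R = 1 := by
    have hAeq : A = R⁻¹ * R⁻¹ := by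
      rw [← Matrix.mul_inv_rev, hRR, Matrix.nonsing_inv_nonsing_inv _ hAinv]
    calc R * A * R = (R * R⁻¹) * (R⁻¹ * R) := by rw [hAeq]; simp only [Matrix.mul_assoc]
    _ = 1 := by
      rw [Matrix.mul_nonsing_inv _ hRunit, Matrix.nonsing_inv_mul _ hRunit, Matrix.one_mul]
  set E : Matrix n n ℂ := R * (B - A) * R with hEdef
  have hE : E.PosSemidef := by
    have := hBA.conjTranspose_mul_mul_same R
    rwa [hRH] at this
  have hRBR : R * B * R = (1 : Matrix n n ℂ) + E := by
    have : R * B * R = R * A * R + R * (B - A) * R := by noncomm_ring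
    rw [this, hRAR, hEdef]
  have hdetP : (R * B * R).det = B.det * A⁻¹.det := by
    rw [det_mul, det_mul]; rw [← hRdet2]; ring
  have honeE : ((1 : Matrix n n ℂ) + E) = (1 : ℂ) • E + (1 : ℂ) • (1 : Matrix n n ℂ) := by
    simp [add_comm]
  have hprod : (R * B * R).det = (((∏ i, (1 * hE.1.eigenvalues i + 1)) : ℝ) : ℂ) := by
    rw [hRBR, honeE]
    exact_mod_cast stmt3_det_smul_add_smul_one hE.1 1 1
  have hge1 : (1:ℝ) ≤ ∏ i, (1 * hE.1.eigenvalues i + 1) := by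
    calc (1:ℝ) = ∏ _i : n, (1:ℝ) := by simp
    _ ≤ ∏ i, (1 * hE.1.eigenvalues i + 1) := by
        apply Finset.prod_le_prod (fun _ _ => zero_le_one)
        intro i _
        have := hE.eigenvalues_nonneg i
        linarith
  obtain ⟨hAre, hApos⟩ := stmt3_posdef_det_eq hA
  have hBdet : B.det = (((∏ i, (1 * hE.1.eigenvalues i + 1)) : ℝ) : ℂ) * A.det := by
    have h1 : B.det * A⁻¹.det = (((∏ i, (1 * hE.1.eigenvalues i + 1)) : ℝ) : ℂ) := by
      rw [← hdetP, hprod]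
    have h2 : A⁻¹.det = (A.det)⁻¹ := by rw [det_nonsing_inv, Ring.inverse_eq_inv']
    rw [h2, mul_inv_eq_iff_eq_mul₀ hA.det_pos.ne'] at h1
    exact h1
  have : B.det.re = (∏ i, (1 * hE.1.eigenvalues i + 1)) * A.det.re := by
    rw [hBdet, hAre, ← Complex.ofReal_mul, Complex.ofReal_re]
    simp
  rw [this]
  nlinarith

lemma stmt3_logdet_concave {A B : Matrix n n ℂ} (hA : A.PosDef) (hB : B.PosDef)
    {t s : ℝ} (ht : 0 ≤ t) (hs : 0 ≤ s) (hts : t + s = 1) :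
    t * Real.log A.det.re + s * Real.log B.det.re
      ≤ Real.log (((t:ℂ) • A + (s:ℂ) • B).det.re) := by
  have hBi : B⁻¹.PosDef := hB.inv
  set R := CFC.sqrt B⁻¹ with hRdef
  have hRR : R * R = B⁻¹ := CFC.sqrt_mul_sqrt_self _ hBi.posSemidef.nonneg
  have hRH : Rᴴ = R := (CFC.sqrt_nonneg B⁻¹).posSemidef.1
  have hBdetne : B.det ≠ 0 := hB.det_pos.ne'
  have hBidetne : B⁻¹.det ≠ 0 := hBi.det_pos.ne'
  have hRdet2 : R.det * R.det = B⁻¹.det := by rw [← det_mul, hRR]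
  have hRdetne : R.det ≠ 0 := fun h => hBidetne (by rw [← hRdet2, h, mul_zero])
  have hRunit : IsUnit R.det := isUnit_iff_ne_zero.mpr hRdetne
  have hBunit : IsUnit B.det := isUnit_iff_ne_zero.mpr hBdetne
  set C := R * A * R with hCdef
  have hC : C.PosSemidef := by
    have := hA.posSemidef.conjTranspose_mul_mul_same R; rwa [hRH] at this
  have hRBR : R * B * R = 1 := by
    have hBeq : B = R⁻¹ * R⁻¹ := by
      rw [← Matrix.mul_inv_rev, hRR, Matrix.nonsing_inv_nonsing_inv _ hBunit]
    calc R * B * R = (R * R⁻¹) * (R⁻¹ * R) := by rw [hBeq]; simp only [Matrix.mul_assoc]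
    _ = 1 := by
      rw [Matrix.mul_nonsing_inv _ hRunit, Matrix.nonsing_inv_mul _ hRunit, Matrix.one_mul]
  have hdetC : C.det = A.det * B⁻¹.det := by rw [hCdef, det_mul, det_mul, ← hRdet2]; ring
  have hcombo : R * ((t:ℂ)•A + (s:ℂ)•B) * R = (t:ℂ)•C + (s:ℂ)•1 := by
    simp only [Matrix.mul_add, Matrix.add_mul, mul_smul_comm, smul_mul_assoc]
    rw [hRBR]
  have hdetcombo : ((t:ℂ)•A + (s:ℂ)•B).det * B⁻¹.det = ((t:ℂ)•C + (s:ℂ)•1).det := by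
    rw [← hcombo, det_mul, det_mul, ← hRdet2]; ring
  set μ := hC.1.eigenvalues with hμdef
  have hCdetreal : C.det = (((∏ i, μ i) : ℝ) : ℂ) := by
    rw [hC.1.det_eq_prod_eigenvalues]; push_cast; rfl
  have hCdetne : C.det ≠ 0 := by
    rw [hdetC]; exact mul_ne_zero hA.det_pos.ne' hBidetne
  have hμpos : ∀ i, 0 < μ i := by
    intro i
    rcases (hC.eigenvalues_nonneg i).lt_or_eq with h|h
    · exact h
    · exfalso; apply hCdetne
      rw [hCdetreal]
      norm_cast
      exact Finset.prod_eq_zero (Finset.mem_univ i) h.symm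
  have hcombodet : ((t:ℂ)•C + (s:ℂ)•1).det = (((∏ i, (t * μ i + s)) : ℝ) : ℂ) :=
    stmt3_det_smul_add_smul_one hC.1 t s
  obtain ⟨hBre, hBpos⟩ := stmt3_posdef_det_eq hB
  have hA' : A.det = C.det * B.det := by
    rw [hdetC, det_nonsing_inv, Ring.inverse_eq_inv']
    field_simp
  have hAdet_re : A.det.re = (∏ i, μ i) * B.det.re := by
    have h : A.det = (((∏ i, μ i) * B.det.re : ℝ) : ℂ) := by
      rw [hA', hCdetreal]
      conv_lhs => rw [hBre]
      push_cast; ring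
    rw [h, Complex.ofReal_re]
  rw [det_nonsing_inv, Ring.inverse_eq_inv', mul_inv_eq_iff_eq_mul₀ hBdetne] at hdetcombo
  have hcombodet_re : ((t:ℂ)•A + (s:ℂ)•B).det.re = (∏ i, (t * μ i + s)) * B.det.re := by
    have h : ((t:ℂ)•A + (s:ℂ)•B).det = (((∏ i, (t * μ i + s)) * B.det.re : ℝ) : ℂ) := by
      rw [hdetcombo, hcombodet]
      conv_lhs => rw [hBre]
      push_cast; ring
    rw [h, Complex.ofReal_re]
  rw [hAdet_re, hcombodet_re]
  have hprodμ : 0 < ∏ i, μ i := Finset.prod_pos (fun i _ => hμpos i)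
  have hterm : ∀ i, 0 < t * μ i + s := by
    intro i
    rcases ht.lt_or_eq with h|h
    · nlinarith [hμpos i]
    · rw [← h] at hts ⊢; simpa using by linarith
  have hprodc : 0 < ∏ i, (t * μ i + s) := Finset.prod_pos (fun i _ => hterm i)
  rw [Real.log_mul hprodμ.ne' hBpos.ne', Real.log_mul hprodc.ne' hBpos.ne',
    Real.log_prod (fun i _ => (hμpos i).ne'), Real.log_prod (fun i _ => (hterm i).ne')]
  have hkey : ∀ i ∈ Finset.univ, t * Real.log (μ i) ≤ Real.log (t * μ i + s) := by
    intro i _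
    have := strictConcaveOn_log_Ioi.concaveOn.2 (Set.mem_Ioi.mpr (hμpos i))
      (Set.mem_Ioi.mpr one_pos) ht hs hts
    simpa using this
  have hsum := Finset.sum_le_sum hkey
  rw [← Finset.mul_sum] at hsum
  have hL : t * Real.log B.det.re + s * Real.log B.det.re = Real.log B.det.re := by
    rw [← add_mul, hts, one_mul]
  nlinarith [hsum, hL]

end Stmt3Aux

/-- `f(X, P) = log((det(I_q − XᴴP⁻¹X)).re)` is jointly concave on the set `S`. -/
theorem stmt3 (p q : ℕ)
    (X₁ X₂ : Matrix (Fin p) (Fin q) ℂ) (P₁ P₂ : Matrix (Fin p) (Fin p) ℂ)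
    (h₁ : P₁.PosDef ∧ ((1 : Matrix (Fin q) (Fin q) ℂ) - X₁.conjTranspose * P₁⁻¹ * X₁).PosDef)
    (h₂ : P₂.PosDef ∧ ((1 : Matrix (Fin q) (Fin q) ℂ) - X₂.conjTranspose * P₂⁻¹ * X₂).PosDef)
    (t : ℝ) (ht0 : 0 ≤ t) (ht1 : t ≤ 1) :
    t * Real.log (((1 : Matrix (Fin q) (Fin q) ℂ)
          - X₁.conjTranspose * P₁⁻¹ * X₁).det.re)
      + (1 - t) * Real.log (((1 : Matrix (Fin q) (Fin q) ℂ)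
          - X₂.conjTranspose * P₂⁻¹ * X₂).det.re)
      ≤ Real.log (((1 : Matrix (Fin q) (Fin q) ℂ)
          - ((t : ℂ) • X₁ + ((1 - t : ℝ) : ℂ) • X₂).conjTranspose
            * ((t : ℂ) • P₁ + ((1 - t : ℝ) : ℂ) • P₂)⁻¹
            * ((t : ℂ) • X₁ + ((1 - t : ℝ) : ℂ) • X₂)).det.re) := by
  obtain ⟨hP₁, hS₁⟩ := h₁
  obtain ⟨hP₂, hS₂⟩ := h₂
  rcases eq_or_lt_of_le ht0 with h0|h0
  · -- t = 0
    rw [← h0]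
    norm_num
  rcases eq_or_lt_of_le ht1 with h1|h1
  · -- t = 1
    rw [h1]
    norm_num
  set s : ℝ := 1 - t with hsdef
  have hs : 0 < s := by rw [hsdef]; linarith
  have hts : t + s = 1 := by rw [hsdef]; ring
  set Y₁ := X₁.conjTranspose * P₁⁻¹ * X₁ with hY₁
  set Y₂ := X₂.conjTranspose * P₂⁻¹ * X₂ with hY₂
  -- block positive semidefiniteness
  haveI := invertibleOfIsUnitDet P₁ (isUnit_iff_ne_zero.mpr hP₁.det_pos.ne')
  haveI := invertibleOfIsUnitDet P₂ (isUnit_iff_ne_zero.mpr hP₂.det_pos.ne')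
  have hM₁ : (fromBlocks P₁ X₁ X₁ᴴ Y₁).PosSemidef := by
    rw [PosDef.fromBlocks₁₁ _ _ hP₁]
    simpa [hY₁] using Matrix.PosSemidef.zero (n := Fin q) (R := ℂ)
  have hM₂ : (fromBlocks P₂ X₂ X₂ᴴ Y₂).PosSemidef := by
    rw [PosDef.fromBlocks₁₁ _ _ hP₂]
    simpa [hY₂] using Matrix.PosSemidef.zero (n := Fin q) (R := ℂ)
  have hMt : ((t:ℂ) • fromBlocks P₁ X₁ X₁ᴴ Y₁ + (s:ℂ) • fromBlocks P₂ X₂ X₂ᴴ Y₂).PosSemidef :=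
    (stmt3_smul_posSemidef hM₁ ht0).add (stmt3_smul_posSemidef hM₂ hs.le)
  rw [fromBlocks_smul, fromBlocks_smul, fromBlocks_add] at hMt
  have hXt : (t:ℂ) • X₁ᴴ + (s:ℂ) • X₂ᴴ = ((t:ℂ) • X₁ + (s:ℂ) • X₂)ᴴ := by
    rw [conjTranspose_add, conjTranspose_smul, conjTranspose_smul]
    norm_num
  rw [hXt] at hMt
  have hPt : ((t:ℂ) • P₁ + (s:ℂ) • P₂).PosDef :=
    (stmt3_smul_posDef hP₁ h0).add (stmt3_smul_posDef hP₂ hs)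
  haveI := invertibleOfIsUnitDet _ (isUnit_iff_ne_zero.mpr hPt.det_pos.ne')
  have hSchur := (PosDef.fromBlocks₁₁ _ _ hPt).mp hMt
  set W := ((t:ℂ) • X₁ + (s:ℂ) • X₂)ᴴ * ((t:ℂ) • P₁ + (s:ℂ) • P₂)⁻¹
      * ((t:ℂ) • X₁ + (s:ℂ) • X₂) with hW
  have hcombo : ((t:ℂ) • ((1 : Matrix (Fin q) (Fin q) ℂ) - Y₁)
      + (s:ℂ) • ((1 : Matrix (Fin q) (Fin q) ℂ) - Y₂)).PosDef :=
    (stmt3_smul_posDef hS₁ h0).add (stmt3_smul_posDef hS₂ hs)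
  have hone : (t:ℂ) • (1 : Matrix (Fin q) (Fin q) ℂ) + (s:ℂ) • 1 = 1 := by
    rw [← add_smul]
    have : (t:ℂ) + (s:ℂ) = 1 := by push_cast; exact_mod_cast hts
    rw [this, one_smul]
  have hsub : ((1 : Matrix (Fin q) (Fin q) ℂ) - W)
      - ((t:ℂ) • ((1 : Matrix (Fin q) (Fin q) ℂ) - Y₁)
        + (s:ℂ) • ((1 : Matrix (Fin q) (Fin q) ℂ) - Y₂))
      = (t:ℂ) • Y₁ + (s:ℂ) • Y₂ - W := by
    calc ((1 : Matrix (Fin q) (Fin q) ℂ) - W)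
        - ((t:ℂ) • ((1 : Matrix (Fin q) (Fin q) ℂ) - Y₁)
          + (s:ℂ) • ((1 : Matrix (Fin q) (Fin q) ℂ) - Y₂))
        = ((t:ℂ) • Y₁ + (s:ℂ) • Y₂ - W)
          + ((1 : Matrix (Fin q) (Fin q) ℂ)
            - ((t:ℂ) • (1 : Matrix (Fin q) (Fin q) ℂ) + (s:ℂ) • 1)) := by module
    _ = (t:ℂ) • Y₁ + (s:ℂ) • Y₂ - W := by rw [hone, sub_self, add_zero]
  have hdiffPSD : (((1 : Matrix (Fin q) (Fin q) ℂ) - W)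
      - ((t:ℂ) • ((1 : Matrix (Fin q) (Fin q) ℂ) - Y₁)
        + (s:ℂ) • ((1 : Matrix (Fin q) (Fin q) ℂ) - Y₂))).PosSemidef := by
    rw [hsub]; exact hSchur
  have step1 := stmt3_logdet_concave hS₁ hS₂ ht0 hs.le hts
  have step2 : ((t:ℂ) • ((1 : Matrix (Fin q) (Fin q) ℂ) - Y₁)
      + (s:ℂ) • ((1 : Matrix (Fin q) (Fin q) ℂ) - Y₂)).det.re
      ≤ ((1 : Matrix (Fin q) (Fin q) ℂ) - W).det.re :=
    stmt3_det_re_le_det_re hcombo hdiffPSD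
  have step3 : Real.log (((t:ℂ) • ((1 : Matrix (Fin q) (Fin q) ℂ) - Y₁)
      + (s:ℂ) • ((1 : Matrix (Fin q) (Fin q) ℂ) - Y₂)).det.re)
      ≤ Real.log (((1 : Matrix (Fin q) (Fin q) ℂ) - W).det.re) :=
    Real.log_le_log (stmt3_posdef_det_eq hcombo).2 step2
  linarith
end

section
/- Let X, X̂ ∈ ℂ^{p×q} and let Y, Ŷ ∈ ℂ^{p×p} be Hermitian positive definite. Define Â = Ŷ⁻¹ − (X̂X̂ᴴ + Ŷ)⁻¹. Then log((det(I_q + XᴴY⁻¹X)).re) ≥ log((det(I_q + X̂ᴴŶ⁻¹X̂)).re) − Re(Tr(X̂ᴴŶ⁻¹X̂)) + 2·Re(Tr(X̂ᴴŶ⁻¹X)) − Re(Tr(Âᴴ(XXᴴ + Y))). -/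
open Matrix ComplexOrder

section Aux

variable {n : Type*} [Fintype n] [DecidableEq n]

open scoped MatrixOrder

private lemma aux_trace_eq_sum {A : Matrix n n ℂ} (hA : A.IsHermitian) :
    A.trace = ∑ i, (hA.eigenvalues i : ℂ) := by
  conv_lhs => rw [hA.spectral_theorem]
  rw [Unitary.conjStarAlgAut_apply, Matrix.trace_mul_cycle,
    Matrix.mem_unitaryGroup_iff'.mp (hA.eigenvectorUnitary).2, Matrix.one_mul,
    Matrix.trace_diagonal]
  rfl

private lemma aux_trace_re_nonneg {A : Matrix n n ℂ} (hA : A.PosSemidef) : 0 ≤ A.trace.re := by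
  have h : (0:ℂ) ≤ A.trace := by
    exact hA.trace_nonneg
  exact (Complex.le_def.mp h).1

private lemma aux_trace_mul_re_nonneg {A B : Matrix n n ℂ} (hA : A.PosSemidef)
    (hB : B.PosSemidef) : 0 ≤ (A * B).trace.re := by
  set s := CFC.sqrt B with hs
  have hssB : s * s = B := CFC.sqrt_mul_sqrt_self B hB.nonneg
  have h1 : (A * B).trace = (s * A * s).trace := by
    rw [← hssB, ← Matrix.mul_assoc, Matrix.trace_mul_comm (A * s) s, ← Matrix.mul_assoc]
  have h2 : (s * A * s).PosSemidef := by
    have := hA.conjTranspose_mul_mul_same s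
    rwa [(CFC.sqrt_nonneg B).posSemidef.isHermitian.eq] at this
  rw [h1]
  exact aux_trace_re_nonneg h2

private lemma aux_det_eq {A : Matrix n n ℂ} (hA : A.PosDef) :
    A.det = (A.det.re : ℂ) ∧ 0 < A.det.re := by
  have h := hA.det_pos
  obtain ⟨h1, h2⟩ := Complex.lt_def.mp h
  simp only [Complex.zero_re, Complex.zero_im] at h1 h2
  exact ⟨Complex.ext rfl (by simp [← h2]), h1⟩

private lemma aux_logdet {A : Matrix n n ℂ} (hA : A.PosDef) :
    Real.log A.det.re ≤ A.trace.re - Fintype.card n := by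
  have hdet : A.det.re = ∏ i, hA.1.eigenvalues i := by
    rw [hA.1.det_eq_prod_eigenvalues]; norm_cast
  have htr : A.trace.re = ∑ i, hA.1.eigenvalues i := by
    rw [aux_trace_eq_sum hA.1]; norm_cast
  rw [hdet, htr, Real.log_prod (fun i _ => (hA.eigenvalues_pos i).ne')]
  calc ∑ i, Real.log (hA.1.eigenvalues i)
      ≤ ∑ i, (hA.1.eigenvalues i - 1) :=
        Finset.sum_le_sum fun i _ => Real.log_le_sub_one_of_pos (hA.eigenvalues_pos i)
    _ = (∑ i, hA.1.eigenvalues i) - Fintype.card n := by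
        rw [Finset.sum_sub_distrib]; simp [Finset.card_univ]

private lemma aux_core {W E : Matrix n n ℂ} (hW : W.PosDef) (hE : E.PosDef) :
    Real.log W.det.re + Real.log E.det.re ≤ (W * E).trace.re - Fintype.card n := by
  set s := CFC.sqrt E with hs
  have hssE : s * s = E := CFC.sqrt_mul_sqrt_self E hE.posSemidef.nonneg
  have hsherm : s.IsHermitian := (CFC.sqrt_nonneg E).posSemidef.isHermitian
  have hN : (s * W * s).PosDef := by
    refine Matrix.PosDef.of_dotProduct_mulVec_pos ?_ fun x hx => ?_
    · have := (hW.posSemidef.conjTranspose_mul_mul_same s).isHermitian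
      rwa [hsherm.eq] at this
    · have hsx : s *ᵥ x ≠ 0 := by
        intro h
        have hEx : E *ᵥ x = 0 := by
          rw [← hssE, ← Matrix.mulVec_mulVec, h, Matrix.mulVec_zero]
        exact (hE.dotProduct_mulVec_pos hx).ne' (by rw [hEx, dotProduct_zero])
      have key : star x ⬝ᵥ ((s * W * s) *ᵥ x) = star (s *ᵥ x) ⬝ᵥ (W *ᵥ (s *ᵥ x)) := by
        rw [← Matrix.mulVec_mulVec, ← Matrix.mulVec_mulVec, Matrix.dotProduct_mulVec,
          Matrix.star_mulVec, hsherm.eq]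
      rw [key]
      exact hW.dotProduct_mulVec_pos hsx
  have htr : (s * W * s).trace = (W * E).trace := by
    rw [Matrix.trace_mul_cycle, hssE, Matrix.trace_mul_comm]
  have hdet : (s * W * s).det = E.det * W.det := by
    rw [Matrix.det_mul, Matrix.det_mul, mul_comm s.det W.det, mul_assoc, ← Matrix.det_mul, hssE,
      mul_comm]
  have h1 := aux_logdet hN
  rw [htr] at h1
  have hre : (s * W * s).det.re = E.det.re * W.det.re := by
    rw [hdet, (aux_det_eq hE).1, (aux_det_eq hW).1]; norm_cast
  rw [hre, Real.log_mul (aux_det_eq hE).2.ne' (aux_det_eq hW).2.ne'] at h1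
  linarith

end Aux

private lemma sca_main {p q : ℕ} (X Xhat : Matrix (Fin p) (Fin q) ℂ)
    (Y Yhat S Sh : Matrix (Fin p) (Fin p) ℂ) (hY : Y.PosDef) (hYhat : Yhat.PosDef)
    (hSdef : S = X * Xᴴ + Y) (hShdef : Sh = Xhat * Xhatᴴ + Yhat) :
    Real.log (((1 : Matrix (Fin q) (Fin q) ℂ) + Xhatᴴ * Yhat⁻¹ * Xhat).det.re)
      - (Xhatᴴ * Yhat⁻¹ * Xhat).trace.re
      + 2 * (Xhatᴴ * Yhat⁻¹ * X).trace.re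
      - ((Yhat⁻¹ - Sh⁻¹)ᴴ * S).trace.re
      ≤ Real.log (((1 : Matrix (Fin q) (Fin q) ℂ) + Xᴴ * Y⁻¹ * X).det.re) := by
  have hS : S.PosDef := by
    rw [hSdef]; exact Matrix.PosDef.posSemidef_add (Matrix.posSemidef_self_mul_conjTranspose X) hY
  have hSh : Sh.PosDef := by
    rw [hShdef]; exact Matrix.PosDef.posSemidef_add (Matrix.posSemidef_self_mul_conjTranspose Xhat) hYhat
  have hYi : Y * Y⁻¹ = 1 := Matrix.mul_nonsing_inv _ ((Matrix.isUnit_iff_isUnit_det _).mp hY.isUnit)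
  have hiY : Y⁻¹ * Y = 1 := Matrix.nonsing_inv_mul _ ((Matrix.isUnit_iff_isUnit_det _).mp hY.isUnit)
  have hSi : S * S⁻¹ = 1 := Matrix.mul_nonsing_inv _ ((Matrix.isUnit_iff_isUnit_det _).mp hS.isUnit)
  have hiS : S⁻¹ * S = 1 := Matrix.nonsing_inv_mul _ ((Matrix.isUnit_iff_isUnit_det _).mp hS.isUnit)
  have hYhi : Yhat * Yhat⁻¹ = 1 :=
    Matrix.mul_nonsing_inv _ ((Matrix.isUnit_iff_isUnit_det _).mp hYhat.isUnit)
  have hiYh : Yhat⁻¹ * Yhat = 1 :=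
    Matrix.nonsing_inv_mul _ ((Matrix.isUnit_iff_isUnit_det _).mp hYhat.isUnit)
  have hShi : Sh * Sh⁻¹ = 1 :=
    Matrix.mul_nonsing_inv _ ((Matrix.isUnit_iff_isUnit_det _).mp hSh.isUnit)
  have hiSh : Sh⁻¹ * Sh = 1 :=
    Matrix.nonsing_inv_mul _ ((Matrix.isUnit_iff_isUnit_det _).mp hSh.isUnit)
  -- resolvent identities
  have hY1 : Y⁻¹ * (X * Xᴴ) * S⁻¹ = Y⁻¹ - S⁻¹ := by
    have h : Y⁻¹ * (X * Xᴴ) = Y⁻¹ * S - 1 := by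
      rw [hSdef, Matrix.mul_add, hiY]; abel
    rw [h, Matrix.sub_mul, Matrix.one_mul, Matrix.mul_assoc, hSi, Matrix.mul_one]
  have hA1 : Yhat⁻¹ * (Xhat * Xhatᴴ) * Sh⁻¹ = Yhat⁻¹ - Sh⁻¹ := by
    have h : Yhat⁻¹ * (Xhat * Xhatᴴ) = Yhat⁻¹ * Sh - 1 := by
      rw [hShdef, Matrix.mul_add, hiYh]; abel
    rw [h, Matrix.sub_mul, Matrix.one_mul, Matrix.mul_assoc, hShi, Matrix.mul_one]
  have hA2 : Sh⁻¹ * (Xhat * Xhatᴴ) * Yhat⁻¹ = Yhat⁻¹ - Sh⁻¹ := by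
    have h0 : Xhat * Xhatᴴ = Sh - Yhat := by rw [hShdef]; abel
    have h : Sh⁻¹ * (Xhat * Xhatᴴ) = 1 - Sh⁻¹ * Yhat := by
      rw [h0, Matrix.mul_sub, hiSh]
    rw [h, Matrix.sub_mul, Matrix.one_mul, Matrix.mul_assoc, hYhi, Matrix.mul_one]
  -- opaque abbreviations
  obtain ⟨W, hWdef⟩ : ∃ W, W = (1 : Matrix (Fin q) (Fin q) ℂ) + Xhatᴴ * Yhat⁻¹ * Xhat := ⟨_, rfl⟩
  obtain ⟨W', hW'def⟩ : ∃ W', W' = (1 : Matrix (Fin q) (Fin q) ℂ) + Xᴴ * Y⁻¹ * X := ⟨_, rfl⟩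
  obtain ⟨E, hEdef⟩ : ∃ E, E = (1 : Matrix (Fin q) (Fin q) ℂ) - Xᴴ * S⁻¹ * X := ⟨_, rfl⟩
  obtain ⟨U, hUdef⟩ : ∃ U, U = Sh⁻¹ * Xhat := ⟨_, rfl⟩
  obtain ⟨F, hFdef⟩ : ∃ F,
    F = (1 : Matrix (Fin q) (Fin q) ℂ) - Uᴴ * X - Xᴴ * U + Uᴴ * S * U := ⟨_, rfl⟩
  have hW : W.PosDef := by
    rw [hWdef]
    exact Matrix.PosDef.add_posSemidef Matrix.PosDef.one
      (hYhat.inv.posSemidef.conjTranspose_mul_mul_same Xhat)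
  have hW' : W'.PosDef := by
    rw [hW'def]
    exact Matrix.PosDef.add_posSemidef Matrix.PosDef.one
      (hY.inv.posSemidef.conjTranspose_mul_mul_same X)
  -- W' * E = 1
  have key : (Xᴴ * Y⁻¹ * X) * (Xᴴ * S⁻¹ * X) = Xᴴ * Y⁻¹ * X - Xᴴ * S⁻¹ * X := by
    calc (Xᴴ * Y⁻¹ * X) * (Xᴴ * S⁻¹ * X) = Xᴴ * (Y⁻¹ * (X * Xᴴ) * S⁻¹) * X := by
          simp only [Matrix.mul_assoc]
      _ = Xᴴ * (Y⁻¹ - S⁻¹) * X := by rw [hY1]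
      _ = Xᴴ * Y⁻¹ * X - Xᴴ * S⁻¹ * X := by rw [Matrix.mul_sub, Matrix.sub_mul]
  have hWE : W' * E = 1 := by
    rw [hW'def, hEdef]
    have expand : ((1 : Matrix (Fin q) (Fin q) ℂ) + Xᴴ * Y⁻¹ * X) * (1 - Xᴴ * S⁻¹ * X)
        = 1 + Xᴴ * Y⁻¹ * X - Xᴴ * S⁻¹ * X - (Xᴴ * Y⁻¹ * X) * (Xᴴ * S⁻¹ * X) := by
      noncomm_ring
    rw [expand, key]; abel
  have hE : E.PosDef := (Matrix.inv_eq_right_inv hWE) ▸ hW'.inv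
  -- conj transposes
  have hUh : Uᴴ = Xhatᴴ * Sh⁻¹ := by
    rw [hUdef, Matrix.conjTranspose_mul, hSh.isHermitian.inv.eq]
  -- F - E is PSD
  have hFE : F - E = (U - S⁻¹ * X)ᴴ * S * (U - S⁻¹ * X) := by
    have h1 : (U - S⁻¹ * X)ᴴ = Uᴴ - Xᴴ * S⁻¹ := by
      rw [Matrix.conjTranspose_sub, Matrix.conjTranspose_mul, hS.isHermitian.inv.eq]
    rw [h1]
    have expand : (Uᴴ - Xᴴ * S⁻¹) * S * (U - S⁻¹ * X)
        = Uᴴ * S * U - Uᴴ * (S * S⁻¹) * X - Xᴴ * (S⁻¹ * S) * U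
          + Xᴴ * S⁻¹ * S * (S⁻¹ * X) := by
      simp only [Matrix.sub_mul, Matrix.mul_sub, Matrix.mul_assoc]
      abel
    have e3 : Xᴴ * S⁻¹ * S * (S⁻¹ * X) = Xᴴ * S⁻¹ * X := by
      rw [Matrix.mul_assoc (Xᴴ * S⁻¹), ← Matrix.mul_assoc S, hSi, Matrix.one_mul]
    rw [expand, hSi, hiS, e3, Matrix.mul_one, Matrix.mul_one, hFdef, hEdef]
    noncomm_ring
  have hFEpsd : (F - E).PosSemidef := by
    rw [hFE]; exact hS.posSemidef.conjTranspose_mul_mul_same _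
  -- W * Uᴴ = Xhatᴴ * Yhat⁻¹
  have hWU : W * Uᴴ = Xhatᴴ * Yhat⁻¹ := by
    rw [hUh, hWdef]
    calc ((1 : Matrix (Fin q) (Fin q) ℂ) + Xhatᴴ * Yhat⁻¹ * Xhat) * (Xhatᴴ * Sh⁻¹)
        = Xhatᴴ * Sh⁻¹ + Xhatᴴ * (Yhat⁻¹ * (Xhat * Xhatᴴ) * Sh⁻¹) := by
          simp only [Matrix.add_mul, Matrix.one_mul, Matrix.mul_assoc]
      _ = Xhatᴴ * Sh⁻¹ + Xhatᴴ * (Yhat⁻¹ - Sh⁻¹) := by rw [hA1]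
      _ = Xhatᴴ * Yhat⁻¹ := by rw [Matrix.mul_sub]; abel
  have hUWU : U * (W * Uᴴ) = Yhat⁻¹ - Sh⁻¹ := by
    rw [hWU, hUdef]
    calc Sh⁻¹ * Xhat * (Xhatᴴ * Yhat⁻¹) = Sh⁻¹ * (Xhat * Xhatᴴ) * Yhat⁻¹ := by
          simp only [Matrix.mul_assoc]
      _ = Yhat⁻¹ - Sh⁻¹ := hA2
  -- trace identities
  have hT1 : (W * (Uᴴ * X)).trace = (Xhatᴴ * Yhat⁻¹ * X).trace := by
    rw [← Matrix.mul_assoc, hWU]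
  have hT2 : (W * (Xᴴ * U)).trace = star (Xhatᴴ * Yhat⁻¹ * X).trace := by
    have h2 : (Xhatᴴ * Yhat⁻¹ * X)ᴴ = Xᴴ * U * W := by
      rw [Matrix.conjTranspose_mul, ← hWU, Matrix.conjTranspose_mul,
        Matrix.conjTranspose_conjTranspose, hW.isHermitian.eq, Matrix.mul_assoc]
    rw [Matrix.trace_mul_comm, ← h2, Matrix.trace_conjTranspose]
  have hT3 : (W * (Uᴴ * S * U)).trace = ((Yhat⁻¹ - Sh⁻¹) * S).trace := by
    have e1 : W * (Uᴴ * S * U) = (W * Uᴴ) * (S * U) := by simp only [Matrix.mul_assoc]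
    have e2 : (S * U) * (W * Uᴴ) = S * (U * (W * Uᴴ)) := by simp only [Matrix.mul_assoc]
    rw [e1, Matrix.trace_mul_comm, e2, hUWU, Matrix.trace_mul_comm]
  have hTrF : (W * F).trace = W.trace - (Xhatᴴ * Yhat⁻¹ * X).trace
      - star (Xhatᴴ * Yhat⁻¹ * X).trace + ((Yhat⁻¹ - Sh⁻¹) * S).trace := by
    have expand : W * F = W - W * (Uᴴ * X) - W * (Xᴴ * U) + W * (Uᴴ * S * U) := by
      rw [hFdef]; noncomm_ring
    rw [expand, Matrix.trace_add, Matrix.trace_sub, Matrix.trace_sub, hT1, hT2, hT3]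
  have hWtr : W.trace = (q : ℂ) + (Xhatᴴ * Yhat⁻¹ * Xhat).trace := by
    rw [hWdef, Matrix.trace_add, Matrix.trace_one]; simp
  -- real parts
  have hTrFre : (W * F).trace.re = (q : ℝ) + (Xhatᴴ * Yhat⁻¹ * Xhat).trace.re
      - 2 * (Xhatᴴ * Yhat⁻¹ * X).trace.re + ((Yhat⁻¹ - Sh⁻¹) * S).trace.re := by
    have := congrArg Complex.re hTrF
    rw [hWtr] at this
    simp only [Complex.add_re, Complex.sub_re, Complex.natCast_re, Complex.star_def,
      Complex.conj_re] at this
    rw [this]; ring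
  -- inequality 1
  have hineq1 : (W * E).trace.re ≤ (W * F).trace.re := by
    have h := aux_trace_mul_re_nonneg hW.posSemidef hFEpsd
    have e : (W * (F - E)).trace = (W * F).trace - (W * E).trace := by
      rw [Matrix.mul_sub, Matrix.trace_sub]
    rw [e, Complex.sub_re] at h
    linarith
  -- inequality 2
  have hcore := aux_core hW hE
  rw [Fintype.card_fin] at hcore
  -- log E = - log W'
  have hdetprod : W'.det.re * E.det.re = 1 := by
    have h := congrArg Matrix.det hWE
    rw [Matrix.det_mul, Matrix.det_one, (aux_det_eq hW').1, (aux_det_eq hE).1] at h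
    exact_mod_cast h
  have hlogE : Real.log E.det.re = - Real.log W'.det.re := by
    rw [eq_inv_of_mul_eq_one_right hdetprod, Real.log_inv]
  -- assemble
  have hherm : (Yhat⁻¹ - Sh⁻¹)ᴴ = Yhat⁻¹ - Sh⁻¹ :=
    (hYhat.isHermitian.inv.sub hSh.isHermitian.inv).eq
  rw [hherm, ← hWdef, ← hW'def]
  have hWre : W.trace.re = (q : ℝ) + (Xhatᴴ * Yhat⁻¹ * Xhat).trace.re := by
    rw [hWtr]; simp
  linarith [hineq1, hcore, hTrFre, hlogE]


/-- The key SCA lower bound (inequality (8) of the paper). -/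
theorem stmt4 (p q : ℕ) (X Xhat : Matrix (Fin p) (Fin q) ℂ)
    (Y Yhat : Matrix (Fin p) (Fin p) ℂ) (hY : Y.PosDef) (hYhat : Yhat.PosDef) :
    Real.log (((1 : Matrix (Fin q) (Fin q) ℂ)
          + Xhat.conjTranspose * Yhat⁻¹ * Xhat).det.re)
      - (Xhat.conjTranspose * Yhat⁻¹ * Xhat).trace.re
      + 2 * (Xhat.conjTranspose * Yhat⁻¹ * X).trace.re
      - ((Yhat⁻¹ - (Xhat * Xhat.conjTranspose + Yhat)⁻¹).conjTranspose
          * (X * X.conjTranspose + Y)).trace.re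
      ≤ Real.log (((1 : Matrix (Fin q) (Fin q) ℂ)
          + X.conjTranspose * Y⁻¹ * X).det.re) :=
  sca_main X Xhat Y Yhat _ _ hY hYhat rfl rfl
end

section
/- Let A ∈ ℂ^{r×n}, B ∈ ℂ^{n×q} with B ≠ 0, let c > 0 be real, and let Y ∈ ℂ^{r×r} be Hermitian with Y − c·‖B‖_F²·I_r positive semidefinite, where ‖B‖_F² = Re(Tr(BᴴB)). Then Y is positive definite and log((det(I_q + (AB)ᴴY⁻¹(AB))).re) ≤ q·log(1 + ‖A‖_F²/c), where ‖A‖_F² = Re(Tr(AᴴA)). -/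
open Matrix ComplexOrder

lemma frobSq {a b : ℕ} (X : Matrix (Fin a) (Fin b) ℂ) :
    (X.conjTranspose * X).trace.re = ∑ j, ∑ i, ‖X i j‖ ^ 2 := by
  simp only [Matrix.trace, Matrix.diag, Matrix.mul_apply, Matrix.conjTranspose_apply]
  rw [Complex.re_sum]
  refine Finset.sum_congr rfl fun j _ => ?_
  rw [Complex.re_sum]
  refine Finset.sum_congr rfl fun i _ => ?_
  rw [mul_comm, show star (X i j) = (starRingEnd ℂ) (X i j) from rfl, Complex.mul_conj,
    Complex.ofReal_re, Complex.normSq_eq_norm_sq]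

lemma frobSq_nonneg {a b : ℕ} (X : Matrix (Fin a) (Fin b) ℂ) :
    0 ≤ (X.conjTranspose * X).trace.re := by
  rw [frobSq]
  positivity

lemma frobSq_pos {a b : ℕ} {X : Matrix (Fin a) (Fin b) ℂ} (hX : X ≠ 0) :
    0 < (X.conjTranspose * X).trace.re := by
  rw [frobSq]
  obtain ⟨i, j, hij⟩ : ∃ i j, X i j ≠ 0 := by
    by_contra h
    push_neg at h
    exact hX (by ext i j; simpa using h i j)
  have h1 : 0 < ‖X i j‖ ^ 2 := pow_pos (norm_pos_iff.mpr hij) 2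
  calc (0:ℝ) < ‖X i j‖ ^ 2 := h1
    _ ≤ ∑ i, ‖X i j‖ ^ 2 :=
        Finset.single_le_sum (f := fun i => ‖X i j‖ ^ 2) (fun k _ => sq_nonneg _)
          (Finset.mem_univ i)
    _ ≤ ∑ j, ∑ i, ‖X i j‖ ^ 2 :=
        Finset.single_le_sum (f := fun j => ∑ i, ‖X i j‖ ^ 2)
          (fun k _ => Finset.sum_nonneg fun _ _ => sq_nonneg _) (Finset.mem_univ j)

lemma trace_re_nonneg {m : ℕ} {P : Matrix (Fin m) (Fin m) ℂ} (hP : P.PosSemidef) :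
    0 ≤ P.trace.re := by
  rw [Matrix.trace, Complex.re_sum]
  refine Finset.sum_nonneg fun j _ => ?_
  have := hP.re_dotProduct_nonneg (Pi.single j 1)
  simpa [Matrix.mulVec_single, dotProduct, Pi.single_apply, apply_ite,
    Finset.sum_ite_eq'] using this

/-- Frobenius submultiplicativity. -/
lemma frobSq_mul_le {a b d : ℕ} (A : Matrix (Fin a) (Fin b) ℂ) (B : Matrix (Fin b) (Fin d) ℂ) :
    ((A * B).conjTranspose * (A * B)).trace.re
      ≤ (A.conjTranspose * A).trace.re * (B.conjTranspose * B).trace.re := by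
  rw [frobSq, frobSq, frobSq]
  have key : ∀ (j : Fin d) (i : Fin a), ‖(A * B) i j‖ ^ 2
      ≤ (∑ k, ‖A i k‖ ^ 2) * (∑ k, ‖B k j‖ ^ 2) := by
    intro j i
    have h1 : ‖(A * B) i j‖ ≤ ∑ k, ‖A i k‖ * ‖B k j‖ := by
      rw [Matrix.mul_apply]
      exact (norm_sum_le _ _).trans (le_of_eq (Finset.sum_congr rfl fun k _ => norm_mul _ _))
    have h2 : ‖(A * B) i j‖ ^ 2 ≤ (∑ k, ‖A i k‖ * ‖B k j‖) ^ 2 :=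
      pow_le_pow_left₀ (norm_nonneg _) h1 2
    exact h2.trans (Finset.sum_mul_sq_le_sq_mul_sq _ _ _)
  calc ∑ j, ∑ i, ‖(A * B) i j‖ ^ 2
      ≤ ∑ j, ∑ i, (∑ k, ‖A i k‖ ^ 2) * (∑ k, ‖B k j‖ ^ 2) :=
        Finset.sum_le_sum fun j _ => Finset.sum_le_sum fun i _ => key j i
    _ = (∑ i, ∑ k, ‖A i k‖ ^ 2) * (∑ j, ∑ k, ‖B k j‖ ^ 2) := by
        rw [Finset.sum_comm]
        exact (Finset.sum_mul_sum Finset.univ Finset.univ _ _).symm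
    _ = (∑ j, ∑ i, ‖A i j‖ ^ 2) * (∑ j, ∑ i, ‖B i j‖ ^ 2) := by
        rw [Finset.sum_comm]

lemma unit_dot {m : ℕ} {Y : Matrix (Fin m) (Fin m) ℂ} (hYh : Y.IsHermitian) (i : Fin m) :
    star ((WithLp.equiv 2 _) (hYh.eigenvectorBasis i)) ⬝ᵥ
      (WithLp.equiv 2 _) (hYh.eigenvectorBasis i) = 1 := by
  have h := (EuclideanSpace.inner_eq_star_dotProduct (hYh.eigenvectorBasis i)
    (hYh.eigenvectorBasis i)).symm
  rw [inner_self_eq_norm_sq_to_K, hYh.eigenvectorBasis.orthonormal.1 i] at h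
  rw [dotProduct_comm]
  simpa using h

lemma key_bound {m : ℕ} {Y : Matrix (Fin m) (Fin m) ℂ} (hYh : Y.IsHermitian) {β : ℝ}
    (hβ : 0 < β) (hY : (Y - (β : ℂ) • (1 : Matrix (Fin m) (Fin m) ℂ)).PosSemidef) :
    Y.PosDef ∧ (((β⁻¹ : ℝ) : ℂ) • (1 : Matrix (Fin m) (Fin m) ℂ) - Y⁻¹).PosSemidef := by
  classical
  have hβI : ((β : ℂ) • (1 : Matrix (Fin m) (Fin m) ℂ)).PosDef := by
    rw [Matrix.smul_one_eq_diagonal]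
    exact Matrix.PosDef.diagonal fun i => by exact_mod_cast hβ
  have hYpd : Y.PosDef := by
    have := Matrix.PosDef.posSemidef_add hY hβI
    simpa using this
  set μ := hYh.eigenvalues with hμdef
  have hμ : ∀ i, β ≤ μ i := by
    intro i
    set v := (WithLp.equiv 2 _) (hYh.eigenvectorBasis i) with hv
    have h0 := hY.re_dotProduct_nonneg v
    have h1 : (Y - (β : ℂ) • 1) *ᵥ v = Y *ᵥ v - (β : ℂ) • v := by
      rw [Matrix.sub_mulVec, Matrix.smul_mulVec, Matrix.one_mulVec]
    rw [h1, dotProduct_sub, dotProduct_smul, map_sub] at h0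
    have h2 : RCLike.re (star v ⬝ᵥ Y *ᵥ v) = μ i := (hYh.eigenvalues_eq i).symm
    have h3 : star v ⬝ᵥ v = 1 := unit_dot hYh i
    rw [h2] at h0
    have h4 : RCLike.re ((β : ℂ) • (star v ⬝ᵥ v)) = β := by
      rw [h3]; simp [RCLike.smul_re]
    rw [h4] at h0
    linarith
  have hμpos : ∀ i, 0 < μ i := fun i => hβ.trans_le (hμ i)
  set U : Matrix (Fin m) (Fin m) ℂ := (hYh.eigenvectorUnitary : Matrix (Fin m) (Fin m) ℂ)
    with hU
  have hU1 : star U * U = 1 := (Unitary.mem_iff.mp hYh.eigenvectorUnitary.2).1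
  have hU2 : U * star U = 1 := (Unitary.mem_iff.mp hYh.eigenvectorUnitary.2).2
  have hsp : Y = U * diagonal (Complex.ofReal ∘ μ) * star U := hYh.spectral_theorem
  have hinv : Y⁻¹ = U * diagonal (fun i => (((μ i)⁻¹ : ℝ) : ℂ)) * star U := by
    refine Matrix.inv_eq_right_inv ?_
    rw [hsp]
    calc U * diagonal (Complex.ofReal ∘ μ) * star U *
          (U * diagonal (fun i => (((μ i)⁻¹ : ℝ) : ℂ)) * star U)
        = U * (diagonal (Complex.ofReal ∘ μ) * (star U * U) *
            diagonal (fun i => (((μ i)⁻¹ : ℝ) : ℂ))) * star U := by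
          noncomm_ring
      _ = U * (diagonal (Complex.ofReal ∘ μ) * diagonal (fun i => (((μ i)⁻¹ : ℝ) : ℂ))) * star U := by
          rw [hU1, mul_one]
      _ = 1 := by
          rw [Matrix.diagonal_mul_diagonal]
          have : (fun i => (Complex.ofReal ∘ μ) i * (((μ i)⁻¹ : ℝ) : ℂ)) = fun _ => (1 : ℂ) := by
            funext i
            simp only [Function.comp_apply]
            rw [← Complex.ofReal_mul, mul_inv_cancel₀ (hμpos i).ne']
            simp
          rw [this, Matrix.diagonal_one, mul_one, hU2]
  have hNdiag : ((β⁻¹ : ℝ) : ℂ) • (1 : Matrix (Fin m) (Fin m) ℂ) - Y⁻¹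
      = U * diagonal (fun i => ((β⁻¹ - (μ i)⁻¹ : ℝ) : ℂ)) * star U := by
    have h5 : ((β⁻¹ : ℝ) : ℂ) • (1 : Matrix (Fin m) (Fin m) ℂ)
        = U * diagonal (fun _ => ((β⁻¹ : ℝ) : ℂ)) * star U := by
      rw [← Matrix.smul_one_eq_diagonal]
      rw [Matrix.mul_smul, mul_one, Matrix.smul_mul, hU2]
    rw [h5, hinv, ← Matrix.sub_mul, ← Matrix.mul_sub, Matrix.diagonal_sub]
    congr 2
    funext i
    push_cast
    ring
  constructor
  · exact hYpd
  · rw [hNdiag, Matrix.star_eq_conjTranspose]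
    refine Matrix.PosSemidef.mul_mul_conjTranspose_same ?_ U
    refine Matrix.posSemidef_diagonal_iff.mpr fun i => ?_
    rw [Complex.zero_le_real]
    have : (μ i)⁻¹ ≤ β⁻¹ := by
      gcongr
      exact hμ i
    linarith

lemma det_trace_eig {m : ℕ} {M : Matrix (Fin m) (Fin m) ℂ} (hM : M.PosSemidef) :
    ((1 : Matrix (Fin m) (Fin m) ℂ) + M).det.re = ∏ i, (1 + hM.1.eigenvalues i)
      ∧ M.trace.re = ∑ i, hM.1.eigenvalues i := by
  classical
  set ev := hM.1.eigenvalues with hl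
  set V : Matrix (Fin m) (Fin m) ℂ := (hM.1.eigenvectorUnitary : Matrix (Fin m) (Fin m) ℂ)
  have hV1 : star V * V = 1 := (Unitary.mem_iff.mp hM.1.eigenvectorUnitary.2).1
  have hV2 : V * star V = 1 := (Unitary.mem_iff.mp hM.1.eigenvectorUnitary.2).2
  have hsp : M = V * diagonal (Complex.ofReal ∘ ev) * star V := hM.1.spectral_theorem
  constructor
  · have h1 : (1 : Matrix (Fin m) (Fin m) ℂ) + M
        = V * diagonal (fun i => 1 + ((ev i : ℝ) : ℂ)) * star V := by
      have : diagonal (fun i => 1 + ((ev i : ℝ) : ℂ))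
          = 1 + diagonal (Complex.ofReal ∘ ev) := by
        rw [← Matrix.diagonal_one, Matrix.diagonal_add]
        rfl
      rw [this, Matrix.mul_add, Matrix.add_mul, mul_one, hV2, ← hsp]
    rw [h1, Matrix.det_mul, Matrix.det_mul, mul_comm (V.det), mul_assoc, ← Matrix.det_mul, hV2,
      Matrix.det_one, mul_one, Matrix.det_diagonal]
    have : (∏ i, (1 + ((ev i : ℝ) : ℂ))) = ((∏ i, (1 + ev i) : ℝ) : ℂ) := by
      push_cast
      rfl
    rw [this, Complex.ofReal_re]
  · have h2 : M.trace = (diagonal (Complex.ofReal ∘ ev)).trace := by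
      conv_lhs => rw [hsp]
      rw [Matrix.trace_mul_cycle, hV1, one_mul]
    rw [h2, Matrix.trace_diagonal]
    rw [Complex.re_sum]
    simp

/-- Upper bound on the per-user rate established in the proof of Theorem 2. -/
theorem stmt11 (r n q : ℕ) (A : Matrix (Fin r) (Fin n) ℂ) (B : Matrix (Fin n) (Fin q) ℂ)
    (hB : B ≠ 0) (c : ℝ) (hc : 0 < c) (Y : Matrix (Fin r) (Fin r) ℂ)
    (hYh : Y.IsHermitian)
    (hY : (Y - ((c * (B.conjTranspose * B).trace.re : ℝ) : ℂ)
            • (1 : Matrix (Fin r) (Fin r) ℂ)).PosSemidef) :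
    Y.PosDef ∧
    Real.log (((1 : Matrix (Fin q) (Fin q) ℂ)
          + (A * B).conjTranspose * Y⁻¹ * (A * B)).det.re)
      ≤ q * Real.log (1 + (A.conjTranspose * A).trace.re / c) := by
  classical
  set fB : ℝ := (B.conjTranspose * B).trace.re with hfB
  set fA : ℝ := (A.conjTranspose * A).trace.re with hfA
  have hfBpos : 0 < fB := frobSq_pos hB
  have hfAnn : 0 ≤ fA := frobSq_nonneg A
  set β : ℝ := c * fB with hβdef
  have hβ : 0 < β := mul_pos hc hfBpos
  obtain ⟨hYpd, hN⟩ := key_bound hYh hβ hY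
  refine ⟨hYpd, ?_⟩
  set X : Matrix (Fin r) (Fin q) ℂ := A * B with hX
  set M : Matrix (Fin q) (Fin q) ℂ := X.conjTranspose * Y⁻¹ * X with hM
  have hMpsd : M.PosSemidef := hYpd.inv.posSemidef.conjTranspose_mul_mul_same X
  obtain ⟨hdet, htr⟩ := det_trace_eig hMpsd
  -- trace bound
  have htrace_le : M.trace.re ≤ fA / c := by
    have hP : (X.conjTranspose * (((β⁻¹ : ℝ) : ℂ) • (1 : Matrix (Fin r) (Fin r) ℂ) - Y⁻¹)
        * X).PosSemidef := hN.conjTranspose_mul_mul_same X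
    have h0 := trace_re_nonneg hP
    have hexp : X.conjTranspose * (((β⁻¹ : ℝ) : ℂ) • (1 : Matrix (Fin r) (Fin r) ℂ) - Y⁻¹) * X
        = ((β⁻¹ : ℝ) : ℂ) • (X.conjTranspose * X) - M := by
      rw [Matrix.mul_sub, Matrix.sub_mul, hM]
      congr 1
      rw [Matrix.mul_smul, Matrix.smul_mul, Matrix.mul_one]
    rw [hexp, Matrix.trace_sub, Matrix.trace_smul, Complex.sub_re, smul_eq_mul,
      Complex.re_ofReal_mul] at h0
    have h1 : M.trace.re ≤ β⁻¹ * (X.conjTranspose * X).trace.re := by linarith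
    have h2 : (X.conjTranspose * X).trace.re ≤ fA * fB := frobSq_mul_le A B
    have h3 : β⁻¹ * (X.conjTranspose * X).trace.re ≤ β⁻¹ * (fA * fB) := by
      apply mul_le_mul_of_nonneg_left h2 (by positivity)
    have h4 : β⁻¹ * (fA * fB) = fA / c := by
      field_simp [hβdef]
      ring
    linarith
  -- determinant bound
  set t : ℝ := fA / c with ht
  have htnn : 0 ≤ t := by positivity
  have hlnn : ∀ i, 0 ≤ hMpsd.1.eigenvalues i := fun i => hMpsd.eigenvalues_nonneg i
  have hlle : ∀ i, hMpsd.1.eigenvalues i ≤ t := by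
    intro i
    calc hMpsd.1.eigenvalues i ≤ ∑ j, hMpsd.1.eigenvalues j :=
          Finset.single_le_sum (fun j _ => hlnn j) (Finset.mem_univ i)
      _ = M.trace.re := htr.symm
      _ ≤ t := htrace_le
  have hprod_le : ∏ i, (1 + hMpsd.1.eigenvalues i) ≤ (1 + t) ^ q := by
    calc ∏ i, (1 + hMpsd.1.eigenvalues i) ≤ ∏ _i : Fin q, (1 + t) :=
          Finset.prod_le_prod (fun i _ => by linarith [hlnn i])
            (fun i _ => by linarith [hlle i])
      _ = (1 + t) ^ q := by simp
  have hprod_pos : (0:ℝ) < ∏ i, (1 + hMpsd.1.eigenvalues i) :=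
    Finset.prod_pos fun i _ => by linarith [hlnn i]
  rw [hdet]
  calc Real.log (∏ i, (1 + hMpsd.1.eigenvalues i))
      ≤ Real.log ((1 + t) ^ q) := Real.log_le_log hprod_pos hprod_le
    _ = q * Real.log (1 + t) := Real.log_pow (1 + t) q
end

section
/- Let h : ℝⁿ → ℝ be differentiable with gradient ∇h Lipschitz continuous with constant L ≥ 0, let Q ⊆ ℝⁿ be nonempty, θ ∈ Q, and α > 0. Suppose x⁺ ∈ Q is a nearest point of Q to θ + α·∇h(θ). Then h(x⁺) ≥ h(θ) − (1/2)·(L − 1/α)·‖x⁺ − θ‖². -/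
open scoped InnerProductSpace

/-- Ascent guarantee of a projected gradient step for a function with
`L`-Lipschitz gradient. -/
theorem stmt14 (n : ℕ) (h : EuclideanSpace ℝ (Fin n) → ℝ)
    (hdiff : Differentiable ℝ h) (L : ℝ) (hL : 0 ≤ L)
    (hlip : ∀ x y, ‖gradient h x - gradient h y‖ ≤ L * ‖x - y‖)
    (Q : Set (EuclideanSpace ℝ (Fin n))) (hQ : Q.Nonempty)
    (θ : EuclideanSpace ℝ (Fin n)) (hθ : θ ∈ Q) (α : ℝ) (hα : 0 < α)
    (xp : EuclideanSpace ℝ (Fin n)) (hxp : xp ∈ Q)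
    (hproj : ∀ y ∈ Q, ‖xp - (θ + α • gradient h θ)‖ ≤ ‖y - (θ + α • gradient h θ)‖) :
    h xp ≥ h θ - (1 / 2) * (L - 1 / α) * ‖xp - θ‖ ^ 2 := by
  set v : EuclideanSpace ℝ (Fin n) := xp - θ with hv
  set g : EuclideanSpace ℝ (Fin n) := gradient h θ with hg
  -- Step 1: projection inequality gives ⟪g, v⟫ ≥ ‖v‖²/(2α)
  have hproj' := hproj θ hθ
  have h1 : ‖v - α • g‖ ≤ ‖α • g‖ := by
    have e1 : xp - (θ + α • g) = v - α • g := by rw [hv]; abel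
    have e2 : θ - (θ + α • g) = -(α • g) := by abel
    rw [e1, e2, norm_neg] at hproj'
    exact hproj'
  have hinner : ‖v‖ ^ 2 ≤ 2 * α * ⟪g, v⟫_ℝ := by
    have hsq : ‖v - α • g‖ ^ 2 ≤ ‖α • g‖ ^ 2 := by
      have := norm_nonneg (v - α • g)
      nlinarith [h1]
    rw [norm_sub_sq_real] at hsq
    rw [real_inner_smul_right] at hsq
    rw [real_inner_comm] at hsq
    nlinarith
  -- Step 2: descent lemma: h xp ≥ h θ + ⟪g, v⟫ - L/2 ‖v‖²
  have key : ∀ t : ℝ, HasDerivAt (fun t : ℝ => h (θ + t • v))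
      (⟪gradient h (θ + t • v), v⟫_ℝ) t := by
    intro t
    have hline : HasDerivAt (fun t : ℝ => θ + t • v) v t := by
      simpa using ((hasDerivAt_id t).smul_const v).const_add θ
    have hf := (hdiff (θ + t • v)).hasGradientAt.hasFDerivAt
    have := hf.comp_hasDerivAt t hline
    rw [InnerProductSpace.toDual_apply_apply] at this
    exact this
  set φ : ℝ → ℝ := fun t => h (θ + t • v) + (L * ‖v‖ ^ 2 / 2) * t ^ 2 - ⟪g, v⟫_ℝ * t with hφ
  have hφderiv : ∀ t : ℝ, HasDerivAt φ
      (⟪gradient h (θ + t • v), v⟫_ℝ + (L * ‖v‖ ^ 2) * t - ⟪g, v⟫_ℝ) t := by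
    intro t
    have h2 : HasDerivAt (fun t : ℝ => (L * ‖v‖ ^ 2 / 2) * t ^ 2)
        ((L * ‖v‖ ^ 2 / 2) * (2 * t)) t := by
      simpa using ((hasDerivAt_pow 2 t).const_mul (L * ‖v‖ ^ 2 / 2))
    have h3 : HasDerivAt (fun t : ℝ => ⟪g, v⟫_ℝ * t) (⟪g, v⟫_ℝ) t := by
      simpa using (hasDerivAt_id t).const_mul ⟪g, v⟫_ℝ
    have := ((key t).add h2).sub h3
    convert this using 1
    · rfl
    · rfl
    · rfl
    · ring
  have hderiv_nonneg : ∀ t ∈ Set.Icc (0:ℝ) 1,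
      0 ≤ ⟪gradient h (θ + t • v), v⟫_ℝ + (L * ‖v‖ ^ 2) * t - ⟪g, v⟫_ℝ := by
    intro t ht
    have hdist : ‖gradient h (θ + t • v) - g‖ ≤ L * (t * ‖v‖) := by
      have := hlip (θ + t • v) θ
      have e : θ + t • v - θ = t • v := by abel
      rw [e, norm_smul, Real.norm_eq_abs, abs_of_nonneg ht.1] at this
      exact this
    have hinner2 : |⟪gradient h (θ + t • v) - g, v⟫_ℝ| ≤ L * (t * ‖v‖) * ‖v‖ :=
      le_trans (abs_real_inner_le_norm _ _)
        (mul_le_mul_of_nonneg_right hdist (norm_nonneg v))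
    rw [inner_sub_left] at hinner2
    have habs := (abs_le.mp hinner2).1
    nlinarith [habs]
  have hφdiff : Differentiable ℝ φ := fun t => (hφderiv t).differentiableAt
  have hmono : MonotoneOn φ (Set.Icc (0:ℝ) 1) := by
    apply monotoneOn_of_deriv_nonneg (convex_Icc 0 1) hφdiff.continuous.continuousOn
      (fun t _ => (hφdiff t).differentiableWithinAt)
    intro t ht
    rw [(hφderiv t).deriv]
    exact hderiv_nonneg t (interior_subset ht)
  have hφ01 : φ 0 ≤ φ 1 := hmono (Set.mem_Icc.mpr ⟨le_refl 0, zero_le_one⟩)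
    (Set.mem_Icc.mpr ⟨zero_le_one, le_refl 1⟩) zero_le_one
  have e0 : φ 0 = h θ := by simp [hφ]
  have e1 : φ 1 = h xp + L * ‖v‖ ^ 2 / 2 - ⟪g, v⟫_ℝ := by
    have hx : θ + (1:ℝ) • v = xp := by rw [hv, one_smul]; abel
    simp only [hφ, hx, one_pow, mul_one]
  rw [e0, e1] at hφ01
  -- Combine
  have : ‖xp - θ‖ = ‖v‖ := by rw [hv]
  rw [this, ge_iff_le]
  have hα' : 0 < 2 * α := by linarith
  have hgv : ‖v‖ ^ 2 / (2 * α) ≤ ⟪g, v⟫_ℝ := (div_le_iff₀ hα').mpr (by linarith)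
  have hane : α ≠ 0 := hα.ne'
  have e : 1 / 2 * (L - 1 / α) * ‖v‖ ^ 2 = L * ‖v‖ ^ 2 / 2 - ‖v‖ ^ 2 / (2 * α) := by
    field_simp
  linarith [hφ01, hgv, e.le, e.ge]
end

section
/- Let h : ℝⁿ → ℝ be differentiable with gradient ∇h Lipschitz continuous with constant L ≥ 0, let Q ⊆ ℝⁿ be nonempty, θ ∈ Q, β > 0, and let α > 0 satisfy 1/α ≥ L + β. Suppose x⁺ ∈ Q is a nearest point of Q to θ + α·∇h(θ). Then h(x⁺) ≥ h(θ) + (β/2)·‖x⁺ − θ‖². Consequently, the line-search condition with parameter β is satisfied for every sufficiently small step size α, so decreasing α geometrically from any positive initial value terminates after finitely many steps. -/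
open InnerProductSpace

/-- Descent lemma (lower-bound form): if the gradient of `h` is `L`-Lipschitz then
`h (θ + v) ≥ h θ + ⟪∇h θ, v⟫ - L/2 ‖v‖²`. -/
lemma descent_aux {n : ℕ} (h : EuclideanSpace ℝ (Fin n) → ℝ)
    (hdiff : Differentiable ℝ h) (L : ℝ) (hL : 0 ≤ L)
    (hlip : ∀ x y, ‖gradient h x - gradient h y‖ ≤ L * ‖x - y‖)
    (θ v : EuclideanSpace ℝ (Fin n)) :
    h (θ + v) ≥ h θ + (inner ℝ (gradient h θ) v : ℝ) - L / 2 * ‖v‖ ^ 2 := by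
  set c : ℝ := (inner ℝ (gradient h θ) v : ℝ) with hc
  set ψ : ℝ → ℝ := fun t => h (θ + t • v) - t * c + L / 2 * (t ^ 2 * ‖v‖ ^ 2) with hψ
  have hφ : ∀ t : ℝ, HasDerivAt (fun t : ℝ => h (θ + t • v))
      ((inner ℝ (gradient h (θ + t • v)) v : ℝ)) t := by
    intro t
    have hline : HasDerivAt (fun t : ℝ => θ + t • v) v t := by
      simpa using ((hasDerivAt_id t).smul_const v).const_add θ
    have H := ((hdiff (θ + t • v)).hasGradientAt.hasFDerivAt).comp_hasDerivAt t hline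
    simp at H ⊢
    exact H
  have hψ' : ∀ t : ℝ, HasDerivAt ψ
      ((inner ℝ (gradient h (θ + t • v)) v : ℝ) - c + L / 2 * (2 * t * ‖v‖ ^ 2)) t := by
    intro t
    have h1 := (hφ t).sub ((hasDerivAt_id t).mul_const c)
    have h2 : HasDerivAt (fun t : ℝ => L / 2 * (t ^ 2 * ‖v‖ ^ 2))
        (L / 2 * (2 * t * ‖v‖ ^ 2)) t := by
      have := ((hasDerivAt_pow 2 t).mul_const (‖v‖ ^ 2)).const_mul (L / 2)
      simpa [mul_comm, mul_assoc, mul_left_comm] using this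
    have H := h1.add h2
    simp [hψ] at H ⊢
    exact H
  have hmono : MonotoneOn ψ (Set.Ici (0:ℝ)) := by
    apply monotoneOn_of_deriv_nonneg (convex_Ici 0)
      (fun t _ => (hψ' t).differentiableAt.continuousAt.continuousWithinAt)
    · intro t ht
      exact (hψ' t).differentiableAt.differentiableWithinAt
    · intro t ht
      rw [(hψ' t).deriv]
      have ht0 : 0 < t := by simpa using ht
      have h1 : (inner ℝ (gradient h (θ + t • v)) v : ℝ) - c
          = (inner ℝ (gradient h (θ + t • v) - gradient h θ) v : ℝ) := by
        rw [inner_sub_left, hc]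
      have h2 := abs_real_inner_le_norm (gradient h (θ + t • v) - gradient h θ) v
      have h3 := hlip (θ + t • v) θ
      have h4 : ‖θ + t • v - θ‖ = t * ‖v‖ := by
        rw [add_sub_cancel_left, norm_smul, Real.norm_eq_abs, abs_of_pos ht0]
      rw [h4] at h3
      have h5 : |(inner ℝ (gradient h (θ + t • v) - gradient h θ) v : ℝ)|
          ≤ L * (t * ‖v‖) * ‖v‖ :=
        h2.trans (by nlinarith [norm_nonneg v])
      have h6 := neg_abs_le (inner ℝ (gradient h (θ + t • v) - gradient h θ) v : ℝ)
      rw [h1]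
      nlinarith
  have key := hmono (Set.self_mem_Ici) (Set.mem_Ici.2 zero_le_one) zero_le_one
  simp only [hψ, zero_smul, add_zero, one_smul, zero_mul, zero_pow, mul_zero,
    one_mul, one_pow, sub_zero] at key
  linarith [key]


/-- Quantitative form of Lemma 1: if `1/α ≥ L + β`, the projected gradient step
satisfies the line-search condition `h(x⁺) ≥ h(θ) + (β/2)‖x⁺ − θ‖²`; moreover,
geometrically decreasing the step size from any positive initial value reaches a
step size satisfying `1/α ≥ L + β` after finitely many steps. -/
theorem stmt15 (n : ℕ) (h : EuclideanSpace ℝ (Fin n) → ℝ)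
    (hdiff : Differentiable ℝ h) (L : ℝ) (hL : 0 ≤ L)
    (hlip : ∀ x y, ‖gradient h x - gradient h y‖ ≤ L * ‖x - y‖)
    (Q : Set (EuclideanSpace ℝ (Fin n))) (hQ : Q.Nonempty)
    (θ : EuclideanSpace ℝ (Fin n)) (hθ : θ ∈ Q) (β : ℝ) (hβ : 0 < β) :
    (∀ α : ℝ, 0 < α → 1 / α ≥ L + β →
      ∀ xp ∈ Q,
        (∀ y ∈ Q, ‖xp - (θ + α • gradient h θ)‖ ≤ ‖y - (θ + α • gradient h θ)‖) →
        h xp ≥ h θ + (β / 2) * ‖xp - θ‖ ^ 2) ∧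
    (∀ α₀ : ℝ, 0 < α₀ → ∀ η : ℝ, 0 < η → η < 1 →
      ∃ k : ℕ, 1 / (α₀ * η ^ k) ≥ L + β) := by
  constructor
  · intro α hα hαL xp hxp hnear
    set g := gradient h θ with hg
    set v := xp - θ with hv
    -- nearest point inequality at y = θ
    have hnp := hnear θ hθ
    have h1 : θ - (θ + α • g) = -(α • g) := by abel
    have h2 : xp - (θ + α • g) = v - α • g := by rw [hv]; abel
    rw [h1, h2, norm_neg] at hnp
    have hsq : ‖v - α • g‖ ^ 2 ≤ ‖α • g‖ ^ 2 :=
      pow_le_pow_left₀ (norm_nonneg _) hnp 2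
    have hexp : ‖v - α • g‖ ^ 2 = ‖v‖ ^ 2 - 2 * (inner ℝ v (α • g) : ℝ) + ‖α • g‖ ^ 2 := by
      simpa using norm_sub_sq_real v (α • g)
    have hinner : (inner ℝ v (α • g) : ℝ) = α * (inner ℝ g v : ℝ) := by
      rw [real_inner_smul_right, real_inner_comm]
    have hge : (inner ℝ g v : ℝ) ≥ ‖v‖ ^ 2 / (2 * α) := by
      rw [ge_iff_le, div_le_iff₀ (by positivity)]
      nlinarith [hsq, hexp, hinner]
    have hdesc := descent_aux h hdiff L hL hlip θ v
    have hxpθ : θ + v = xp := by rw [hv]; abel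
    rw [hxpθ] at hdesc
    have hstep : L + β ≤ 1 / α := hαL
    have hv2 : (0:ℝ) ≤ ‖v‖ ^ 2 := by positivity
    have hkey : (L + β) / 2 * ‖v‖ ^ 2 ≤ ‖v‖ ^ 2 / (2 * α) := by
      have h1α : (L + β) * α ≤ 1 := (le_div_iff₀ hα).mp hstep
      rw [le_div_iff₀ (by positivity : (0:ℝ) < 2 * α)]
      nlinarith [h1α, hv2, hα.le]
    linarith [hdesc, hge, hkey]
  · intro α₀ hα₀ η hη hη1
    have hLβ : 0 < L + β := by linarith
    obtain ⟨k, hk⟩ := exists_pow_lt_of_lt_one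
      (show (0:ℝ) < 1 / (α₀ * (L + β)) by positivity) hη1
    refine ⟨k, ?_⟩
    have hηk : 0 < η ^ k := pow_pos hη k
    rw [ge_iff_le, le_div_iff₀ (by positivity)]
    rw [lt_div_iff₀ (by positivity)] at hk
    nlinarith
end
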